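/- The space of injective linear maps from ℝ^d to ℝ^∞ (finitely supported sequences) is contractible. -/

import Mathlib

/-- `ℝ^∞` (finitely supported sequences) with the topology of pointwise convergence
(induced from the product topology on `ℕ → ℝ`, which agrees with the colimit topology
for purposes of weak homotopy type). -/
noncomputable instance : TopologicalSpace (ℕ →₀ ℝ) :=
  TopologicalSpace.induced (fun f : ℕ →₀ ℝ => (f : ℕ → ℝ)) inferInstance

/-- The space of linear maps `ℝ^d → ℝ^∞`, topologized by the topology of pointwise
convergence (which on linear maps from a finite-dimensional space coincides with the
compact-open topology). -/
noncomputable instance (d : ℕ) :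
    TopologicalSpace ((Fin d → ℝ) →ₗ[ℝ] (ℕ →₀ ℝ)) :=
  TopologicalSpace.induced
    (fun f : (Fin d → ℝ) →ₗ[ℝ] (ℕ →₀ ℝ) => (f : (Fin d → ℝ) → (ℕ →₀ ℝ))) inferInstance

/-!
Let `D` be the shift `eₙ ↦ e₂ₙ₊₁` of `ℝ^∞` onto the odd coordinates and `J : ℝ^d → ℝ^∞` the
embedding onto the even coordinates. The straight-line homotopy from `f` to `D ∘ f` stays among
injective maps, because `D` moves the top index of every nonzero vector strictly upwards; the
straight line from `D ∘ f` to `J` does too, because the two maps have disjoint ranges.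
Composing the two contracts the space onto the point `J`.
-/

open Function

theorem LinearMap.injective_one_sub_smul_add_smul_of_disjoint_range {R M N : Type*} [CommRing R]
    [AddCommGroup M] [Module R M] [AddCommGroup N] [Module R N] {A B : M →ₗ[R] N}
    (hA : Injective A) (hB : Injective B) (hAB : Disjoint (range A) (range B)) (t : R) :
    Injective ((1 - t) • A + t • B) := by
  rw [← ker_eq_bot, eq_bot_iff]
  intro x hx
  have hAx : A ((1 - t) • x) = B (-(t • x)) := by
    simpa [eq_neg_iff_add_eq_zero] using hx
  have hzero : A ((1 - t) • x) = 0 :=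
    Submodule.disjoint_def.1 hAB _ (mem_range_self A _) (hAx ▸ mem_range_self B _)
  have h₁ : (1 - t) • x = 0 := (map_eq_zero_iff A hA).1 hzero
  have h₂ : t • x = 0 := neg_eq_zero.1 <| (map_eq_zero_iff B hB).1 (hAx ▸ hzero)
  simpa [sub_smul, h₂] using h₁

namespace Finsupp

theorem injective_one_sub_smul_id_add_smul_lmapDomain {R α : Type*} [CommRing R]
    [NoZeroDivisors R] [LinearOrder α] {σ : α → α} (hσ : Injective σ) (hlt : ∀ a, a < σ a)
    (t : R) :
    Injective ((1 - t) • LinearMap.id + t • lmapDomain R R σ : (α →₀ R) →ₗ[R] α →₀ R) := by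
  rcases eq_or_ne t 0 with rfl | ht
  · simpa using injective_id
  rw [← LinearMap.ker_eq_bot, eq_bot_iff]
  intro u hu
  by_contra hu0
  have hne : u.support.Nonempty := support_nonempty_iff.2 hu0
  set a := u.support.max' hne
  -- `σ a` lies above the support of `u`, so there only `t • lmapDomain R R σ u` contributes.
  have hσa : u (σ a) = 0 :=
    notMem_support_iff.1 fun h => (hlt a).not_ge (u.support.le_max' _ h)
  have hcoeff : t * u a = 0 := by
    simpa [hσ, hσa] using DFunLike.congr_fun (LinearMap.mem_ker.1 hu) (σ a)
  exact mem_support_iff.1 (u.support.max'_mem hne) ((mul_eq_zero.1 hcoeff).resolve_left ht)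

theorem range_lmapDomain_eq_supported {α β R M : Type*} [Semiring R] [AddCommMonoid M]
    [Module R M] (f : α → β) :
    LinearMap.range (lmapDomain M R f) = supported M R (Set.range f) := by
  rw [LinearMap.range_eq_map, ← supported_univ, lmapDomain_supported, Set.image_univ]

end Finsupp

def ContinuousMap.Homotopy.affineSubtype {X E : Type*} [TopologicalSpace X] [AddCommGroup E]
    [TopologicalSpace E] [IsTopologicalAddGroup E] [Module ℝ E] [ContinuousSMul ℝ E]
    {P : E → Prop} (f g : C(X, Subtype P))
    (h : ∀ (t : unitInterval) (x : X), P (AffineMap.lineMap (f x : E) (g x) (t : ℝ))) :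
    f.Homotopy g where
  toFun p := ⟨AffineMap.lineMap (f p.2 : E) (g p.2) (p.1 : ℝ), h p.1 p.2⟩
  continuous_toFun := by
    refine Continuous.subtype_mk ?_ _
    simp only [AffineMap.lineMap_apply_module]
    fun_prop
  map_zero_left x := by simp
  map_one_left x := by simp

instance : IsTopologicalAddGroup (ℕ →₀ ℝ) := topologicalAddGroup_induced (Finsupp.lcoeFun (R := ℝ))

instance : ContinuousSMul ℝ (ℕ →₀ ℝ) := continuousSMul_induced (Finsupp.lcoeFun (R := ℝ))

instance (d : ℕ) : IsTopologicalAddGroup ((Fin d → ℝ) →ₗ[ℝ] (ℕ →₀ ℝ)) :=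
  topologicalAddGroup_induced (LinearMap.ltoFun ℝ (Fin d → ℝ) (ℕ →₀ ℝ) ℝ)

instance (d : ℕ) : ContinuousSMul ℝ ((Fin d → ℝ) →ₗ[ℝ] (ℕ →₀ ℝ)) :=
  continuousSMul_induced (LinearMap.ltoFun ℝ (Fin d → ℝ) (ℕ →₀ ℝ) ℝ)

theorem Finsupp.continuous_lmapDomain {σ : ℕ → ℕ} (hσ : Injective σ) :
    Continuous (lmapDomain ℝ ℝ σ) := by
  refine continuous_induced_rng.2 <| continuous_pi fun m => ?_
  by_cases hm : m ∈ Set.range σ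
  · obtain ⟨n, rfl⟩ := hm
    simp only [comp_apply, lmapDomain_apply, mapDomain_apply hσ]
    exact (continuous_apply n).comp continuous_induced_dom
  · simp only [comp_apply, lmapDomain_apply, mapDomain_of_notMem_range _ _ hm]
    exact continuous_const

theorem LinearMap.continuous_comp_left {d : ℕ} {D : (ℕ →₀ ℝ) →ₗ[ℝ] (ℕ →₀ ℝ)}
    (hD : Continuous D) : Continuous fun f : (Fin d → ℝ) →ₗ[ℝ] (ℕ →₀ ℝ) => D ∘ₗ f :=
  continuous_induced_rng.2 <| continuous_pi fun x =>
    hD.comp <| (continuous_apply x).comp continuous_induced_dom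

theorem two_mul_add_one_injective : Injective fun n : ℕ => 2 * n + 1 :=
  fun m n h => by simp only at h; omega

noncomputable def oddShift : (ℕ →₀ ℝ) →ₗ[ℝ] (ℕ →₀ ℝ) :=
  Finsupp.lmapDomain ℝ ℝ fun n => 2 * n + 1

noncomputable def evenEmbedding (d : ℕ) : (Fin d → ℝ) →ₗ[ℝ] (ℕ →₀ ℝ) :=
  Finsupp.lmapDomain ℝ ℝ (fun i : Fin d => 2 * (i : ℕ)) ∘ₗ
    (Finsupp.linearEquivFunOnFinite ℝ ℝ (Fin d)).symm.toLinearMap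

theorem oddShift_injective : Injective oddShift :=
  Finsupp.mapDomain_injective two_mul_add_one_injective

theorem evenEmbedding_injective (d : ℕ) : Injective (evenEmbedding d) :=
  (Finsupp.mapDomain_injective fun i j h => by omega).comp
    (Finsupp.linearEquivFunOnFinite ℝ ℝ (Fin d)).symm.injective

theorem injective_lineMap_oddShift_comp {d : ℕ} {f : (Fin d → ℝ) →ₗ[ℝ] (ℕ →₀ ℝ)}
    (hf : Injective f) (t : ℝ) : Injective (AffineMap.lineMap f (oddShift ∘ₗ f) t) := by
  have h := (Finsupp.injective_one_sub_smul_id_add_smul_lmapDomain two_mul_add_one_injective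
    (fun n => show n < 2 * n + 1 by omega) t).comp hf
  rw [← LinearMap.coe_comp, LinearMap.add_comp, LinearMap.smul_comp, LinearMap.smul_comp,
    LinearMap.id_comp] at h
  rw [AffineMap.lineMap_apply_module]
  exact h

theorem injective_lineMap_oddShift_comp_evenEmbedding {d : ℕ}
    {f : (Fin d → ℝ) →ₗ[ℝ] (ℕ →₀ ℝ)} (hf : Injective f) (t : ℝ) :
    Injective (AffineMap.lineMap (oddShift ∘ₗ f) (evenEmbedding d) t) := by
  have hdisj : Disjoint (LinearMap.range (oddShift ∘ₗ f)) (LinearMap.range (evenEmbedding d)) :=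
    .mono ((LinearMap.range_comp_le_range _ _).trans
      (Finsupp.range_lmapDomain_eq_supported _).le) ((LinearMap.range_comp_le_range _ _).trans
      (Finsupp.range_lmapDomain_eq_supported _).le)
      (Finsupp.disjoint_supported_supported <| Set.disjoint_range_iff.2 fun m i => by omega)
  rw [AffineMap.lineMap_apply_module]
  exact LinearMap.injective_one_sub_smul_add_smul_of_disjoint_range
    (A := oddShift ∘ₗ f) (oddShift_injective.comp hf) (evenEmbedding_injective d) hdisj t

abbrev InjectiveLinearMap (d : ℕ) := {f : (Fin d → ℝ) →ₗ[ℝ] (ℕ →₀ ℝ) // Injective f}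

noncomputable def oddShiftComp (d : ℕ) : C(InjectiveLinearMap d, InjectiveLinearMap d) where
  toFun f := ⟨oddShift ∘ₗ f.1, oddShift_injective.comp f.2⟩
  continuous_toFun :=
    ((LinearMap.continuous_comp_left (Finsupp.continuous_lmapDomain two_mul_add_one_injective)).comp
      continuous_subtype_val).subtype_mk _

/-- The space of injective linear maps `ℝ^d → ℝ^∞` is contractible. -/
theorem stmt3 (d : ℕ) :
    ContractibleSpace {f : (Fin d → ℝ) →ₗ[ℝ] (ℕ →₀ ℝ) // Function.Injective f} := by
  rw [contractible_iff_id_nullhomotopic]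
  exact ⟨⟨evenEmbedding d, evenEmbedding_injective d⟩, .trans (g := oddShiftComp d)
    ⟨.affineSubtype _ _ fun t f => injective_lineMap_oddShift_comp f.2 t⟩
    ⟨.affineSubtype _ _ fun t f => injective_lineMap_oddShift_comp_evenEmbedding f.2 t⟩⟩
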